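/- Let G be the generalized dihedral group on a finite abelian group A with involution t, and let S ⊆ G be an inverse-closed generating set with |S| = 4 and |S ∩ At| = 3, say S = {s, t, t s₀, t s₁} with s, s₀, s₁ ∈ A and s an involution. Then Cay(G,S) does not admit a perfect code. -/

import Mathlib

def cayGraph {G : Type*} [Group G] (S : Set G) : SimpleGraph G :=
  SimpleGraph.fromRel (fun x y => y * x⁻¹ ∈ S)

def IsPerfectCode {V : Type*} (Γ : SimpleGraph V) (D : Set V) : Prop :=
  ∀ v : V, ∃! d, d ∈ D ∧ (d = v ∨ Γ.Adj d v)

/-!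
Let `V` be the union of the cosets `{x, s * x}` that meet the perfect code `D`. As `s` is a
central involution, the conditions that `x` and `s * x` are each dominated exactly once say
that `V` is a `(0,2)`-regular set of the cubic Cayley graph with connection set
`{t, t * s₀, t * s₁}`. Compare `V` with `{x | t * x ∈ V}`. If some `z` lies in neither, a short
chase through the translates of `z` by `s₀^{±1}, s₁^{±1}` puts one point into both,
contradicting independence. Otherwise the two sets cover `G`, so `V` is stable under `s₀` and
`s₁`, hence (`G` being finite) under their inverses, and then for any `x ∈ V` the vertex
`t * x` has three neighbours in `V`.
-/

section CayleyGraph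

variable {G : Type*} [Group G] {S : Set G}

theorem eq_or_cayGraph_adj_iff (hS : ∀ x ∈ S, x⁻¹ ∈ S) {d v : G} :
    d = v ∨ (cayGraph S).Adj d v ↔ d * v⁻¹ ∈ insert 1 S := by
  have hsymm : v * d⁻¹ ∈ S ↔ d * v⁻¹ ∈ S :=
    ⟨fun h => by simpa using hS _ h, fun h => by simpa using hS _ h⟩
  rw [cayGraph, SimpleGraph.fromRel_adj, hsymm, or_self, Set.mem_insert_iff, eq_comm,
    mul_inv_eq_one]
  tauto

theorem isPerfectCode_cayGraph_iff (hS : ∀ x ∈ S, x⁻¹ ∈ S) {D : Set G} :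
    IsPerfectCode (cayGraph S) D ↔ ∀ v, ∃! c ∈ insert 1 S, c * v ∈ D := by
  refine forall_congr' fun v => (Equiv.mulRight v⁻¹).existsUnique_congr fun d => ?_
  simp [eq_or_cayGraph_adj_iff hS, and_comm]

end CayleyGraph

theorem List.nodup_of_ncard_eq_length {α : Type*} {l : List α}
    (h : {a | a ∈ l}.ncard = l.length) : l.Nodup := by
  classical
  rw [← List.coe_toFinset, Set.ncard_coe_finset] at h
  exact Multiset.toFinset_card_eq_card_iff_nodup.mp h

theorem Set.two_of_three_of_ncard_sep_eq_two {α : Type*} {u₀ u₁ u₂ : α} (h₀₁ : u₀ ≠ u₁)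
    (h₀₂ : u₀ ≠ u₂) (h₁₂ : u₁ ≠ u₂) {p : α → Prop}
    (hp : {u ∈ ({u₀, u₁, u₂} : Set α) | p u}.ncard = 2) :
    ((p u₀ ∨ p u₁) ∧ (p u₀ ∨ p u₂) ∧ (p u₁ ∨ p u₂)) ∧ ¬ (p u₀ ∧ p u₁ ∧ p u₂) := by
  obtain ⟨v, w, hvw, he⟩ := Set.ncard_eq_two.mp hp
  have hmem := fun u => Set.ext_iff.mp he u
  simp only [Set.mem_insert_iff, Set.mem_singleton_iff] at hmem
  have := hmem u₀; have := hmem u₁; have := hmem u₂; have := hmem v; have := hmem w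
  grind

theorem Set.inv_mul_mem_of_forall_mul_mem {G : Type*} [Group G] [Finite G] {X : Set G}
    {c : G} (h : ∀ x ∈ X, c * x ∈ X) {x : G} (hx : x ∈ X) : c⁻¹ * x ∈ X := by
  obtain ⟨y, hy, rfl⟩ := ((X.toFinite.injOn_iff_bijOn_of_mapsTo h).mp
    (mul_right_injective c).injOn).surjOn hx
  simpa using hy

/-- `V` is a `(0,2)`-regular set of the Cayley graph with connection set `{τ₀, τ₁, τ₂}`: it is
independent, and every vertex outside `V` has exactly two neighbours in `V`. -/
structure IsZeroTwoRegular {G : Type*} [Mul G] (τ₀ τ₁ τ₂ : G) (V : Set G) : Prop where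
  notMem_of_mem : ∀ x ∈ V, τ₀ * x ∉ V ∧ τ₁ * x ∉ V ∧ τ₂ * x ∉ V
  two_le : ∀ x ∉ V,
    (τ₀ * x ∈ V ∨ τ₁ * x ∈ V) ∧ (τ₀ * x ∈ V ∨ τ₂ * x ∈ V) ∧ (τ₁ * x ∈ V ∨ τ₂ * x ∈ V)
  not_all : ∀ x, ¬ (τ₀ * x ∈ V ∧ τ₁ * x ∈ V ∧ τ₂ * x ∈ V)

section CosetHull

variable {G : Type*} [Group G] {s : G} {R D : Set G}

def cosetHull (s : G) (D : Set G) : Set G := {x | x ∈ D ∨ s * x ∈ D}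

theorem mul_notMem_cosetHull (hD : ∀ v, ∃! c ∈ insert 1 (insert s R), c * v ∈ D)
    (hs : s * s = 1) {τ : G} (hτ : τ ∈ R) (hτ1 : τ ≠ 1) (hτs : τ ≠ s) (hsτ : Commute s τ)
    {x : G} (hx : x ∈ cosetHull s D) : τ * x ∉ cosetHull s D := by
  have hτR : τ ∈ insert 1 (insert s R) := by simp [hτ]
  have h1R : (1 : G) ∈ insert 1 (insert s R) := by simp
  have hsR : s ∈ insert 1 (insert s R) := by simp
  have hτsx : τ * (s * x) = s * (τ * x) := by rw [← mul_assoc, ← hsτ.eq, mul_assoc]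
  rintro (hτx | hτx) <;> rcases hx with hx | hx
  · exact hτ1 ((hD x).unique ⟨hτR, hτx⟩ ⟨h1R, by rwa [one_mul]⟩)
  · exact hτs ((hD x).unique ⟨hτR, hτx⟩ ⟨hsR, hx⟩)
  · exact hτs ((hD (s * x)).unique ⟨hτR, by rwa [hτsx]⟩
      ⟨hsR, by rwa [← mul_assoc, hs, one_mul]⟩)
  · exact hτ1 ((hD (s * x)).unique ⟨hτR, by rwa [hτsx]⟩ ⟨h1R, by rwa [one_mul]⟩)

/-- `x` and `s * x` are dominated by `τ * x` and `τ' * (s * x)` with `τ ≠ τ'` in `R`, and these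
are the only `σ ∈ R` with `σ * x ∈ cosetHull s D`. -/
theorem ncard_mul_mem_cosetHull (hD : ∀ v, ∃! c ∈ insert 1 (insert s R), c * v ∈ D)
    (hs : s * s = 1) (hs1 : s ≠ 1) (hsR : ∀ τ ∈ R, Commute s τ)
    {x : G} (hx : x ∉ cosetHull s D) : {σ ∈ R | σ * x ∈ cosetHull s D}.ncard = 2 := by
  obtain ⟨hx₁, hx₂⟩ := not_or.mp hx
  obtain ⟨τ, ⟨hτ, hτx⟩, hτu⟩ := hD x
  obtain ⟨τ', ⟨hτ', hτ'x⟩, hτ'u⟩ := hD (s * x)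
  have hτR : τ ∈ R := by
    rcases hτ with rfl | rfl | hτ
    · exact absurd (by rwa [one_mul] at hτx) hx₁
    · exact absurd hτx hx₂
    · exact hτ
  have hτ'R : τ' ∈ R := by
    rcases hτ' with rfl | rfl | hτ'
    · exact absurd (by rwa [one_mul] at hτ'x) hx₂
    · exact absurd (by rwa [← mul_assoc, hs, one_mul] at hτ'x) hx₁
    · exact hτ'
  have hτ'x' : s * (τ' * x) ∈ D := by rwa [← mul_assoc, (hsR τ' hτ'R).eq, mul_assoc]
  refine Set.ncard_eq_two.mpr ⟨τ, τ', fun h => ?_, Set.ext fun σ => ?_⟩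
  · subst h
    exact hs1 ((hD (τ * x)).unique ⟨by simp, hτ'x'⟩ ⟨by simp, by rwa [one_mul]⟩)
  simp only [cosetHull, Set.mem_sep_iff, Set.mem_insert_iff, Set.mem_singleton_iff]
  constructor
  · rintro ⟨hσ, hσx | hσx⟩
    · exact Or.inl (hτu σ ⟨by simp [hσ], hσx⟩)
    · exact Or.inr (hτ'u σ ⟨by simp [hσ], by rwa [← mul_assoc, ← (hsR σ hσ).eq, mul_assoc]⟩)
  · rintro (rfl | rfl)
    · exact ⟨hτR, Or.inl hτx⟩
    · exact ⟨hτ'R, Or.inr hτ'x'⟩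

theorem isZeroTwoRegular_cosetHull {τ₀ τ₁ τ₂ : G}
    (hD : ∀ v, ∃! c ∈ ({1, s, τ₀, τ₁, τ₂} : Set G), c * v ∈ D) (hs : s * s = 1)
    (hsτ : ∀ τ ∈ ({τ₀, τ₁, τ₂} : Set G), Commute s τ) (hnodup : [1, s, τ₀, τ₁, τ₂].Nodup) :
    IsZeroTwoRegular τ₀ τ₁ τ₂ (cosetHull s D) := by
  obtain ⟨⟨h1s, h1τ₀, h1τ₁, h1τ₂⟩, ⟨hsτ₀, hsτ₁, hsτ₂⟩, ⟨hτ₀₁, hτ₀₂⟩, hτ₁₂⟩ := by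
    simpa using hnodup
  have isolated (τ : G) (hτ : τ ∈ ({τ₀, τ₁, τ₂} : Set G)) (hτ1 : 1 ≠ τ) (hτs : s ≠ τ) {x : G}
      (hx : x ∈ cosetHull s D) : τ * x ∉ cosetHull s D :=
    mul_notMem_cosetHull hD hs hτ hτ1.symm hτs.symm (hsτ τ hτ) hx
  have exactly_two {x : G} (hx : x ∉ cosetHull s D) :=
    Set.two_of_three_of_ncard_sep_eq_two hτ₀₁ hτ₀₂ hτ₁₂
      (ncard_mul_mem_cosetHull hD hs (Ne.symm h1s) hsτ hx)
  refine ⟨fun x hx => ⟨isolated τ₀ (by simp) h1τ₀ hsτ₀ hx, isolated τ₁ (by simp) h1τ₁ hsτ₁ hx,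
    isolated τ₂ (by simp) h1τ₂ hsτ₂ hx⟩, fun x hx => (exactly_two hx).1, fun x => ?_⟩
  by_cases hx : x ∈ cosetHull s D
  · exact fun h => isolated τ₀ (by simp) h1τ₀ hsτ₀ hx h.1
  · exact (exactly_two hx).2

end CosetHull

namespace IsZeroTwoRegular

variable {G : Type*} [Group G] {t a b : G} {V : Set G}

theorem notMem_inv_mul_of_mul_mem (h : IsZeroTwoRegular t (t * a) (t * b) V)
    (ht : t * t = 1) (hta : t * a * t = a⁻¹) (htb : t * b * t = b⁻¹) {x : G}
    (hx : t * x ∈ V) : x ∉ V ∧ a⁻¹ * x ∉ V ∧ b⁻¹ * x ∉ V := by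
  simpa only [← mul_assoc, ht, one_mul, hta, htb] using h.notMem_of_mem _ hx

theorem two_le_inv_mul_of_mul_notMem (h : IsZeroTwoRegular t (t * a) (t * b) V)
    (ht : t * t = 1) (hta : t * a * t = a⁻¹) (htb : t * b * t = b⁻¹) {x : G}
    (hx : t * x ∉ V) :
    (x ∈ V ∨ a⁻¹ * x ∈ V) ∧ (x ∈ V ∨ b⁻¹ * x ∈ V) ∧ (a⁻¹ * x ∈ V ∨ b⁻¹ * x ∈ V) := by
  simpa only [← mul_assoc, ht, one_mul, hta, htb] using h.two_le _ hx

theorem not_all_inv_mul (h : IsZeroTwoRegular t (t * a) (t * b) V) (ht : t * t = 1)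
    (hta : t * a * t = a⁻¹) (htb : t * b * t = b⁻¹) (x : G) :
    ¬ (x ∈ V ∧ a⁻¹ * x ∈ V ∧ b⁻¹ * x ∈ V) := by
  simpa only [← mul_assoc, ht, one_mul, hta, htb] using h.not_all (t * x)

theorem mem_or_mul_mem (h : IsZeroTwoRegular t (t * a) (t * b) V) (ht : t * t = 1)
    (hta : t * a * t = a⁻¹) (htb : t * b * t = b⁻¹) (hab : Commute a b) (z : G) :
    z ∈ V ∨ t * z ∈ V := by
  by_contra! ⟨hz, htz⟩
  have comm (w : G) : b * (a⁻¹ * w) = a⁻¹ * (b * w) := hab.inv_left.symm.left_comm w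
  have hbz : t * b * z ∈ V := (h.two_le z hz).2.1.resolve_left htz
  obtain ⟨haz, hbz', -⟩ := h.two_le_inv_mul_of_mul_notMem ht hta htb htz
  replace haz := haz.resolve_left hz
  replace hbz' := hbz'.resolve_left hz
  have hy : a⁻¹ * (b⁻¹ * z) ∈ V := by
    by_contra hy
    rcases (h.two_le _ hy).2.2 with h' | h'
    · rw [mul_assoc, mul_inv_cancel_left] at h'
      exact (h.notMem_of_mem _ hbz').1 h'
    · rw [mul_assoc, comm, mul_inv_cancel_left] at h'
      exact (h.notMem_of_mem _ haz).1 h'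
  have hq : a⁻¹ * (a⁻¹ * z) ∉ V := fun hq =>
    h.not_all_inv_mul ht hta htb (a⁻¹ * z) ⟨haz, hq, by rwa [hab.inv_inv.symm.left_comm]⟩
  have hbq : t * b * (a⁻¹ * (a⁻¹ * z)) ∈ V := by
    refine (h.two_le _ hq).2.2.resolve_left ?_
    rw [mul_assoc, mul_inv_cancel_left]
    exact (h.notMem_of_mem _ haz).1
  have hr : a⁻¹ * (b * z) ∉ V :=
    (h.notMem_inv_mul_of_mul_mem ht hta htb (x := b * z) (by rwa [← mul_assoc])).2.1
  have htr : t * (a⁻¹ * (b * z)) ∉ V := by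
    rw [← comm, ← mul_assoc]
    exact (h.notMem_of_mem _ haz).2.2
  have hbq' := (h.two_le_inv_mul_of_mul_notMem ht hta htb htr).1.resolve_left hr
  rw [← comm, ← comm] at hbq'
  exact (h.notMem_of_mem _ hbq').1 (by rwa [← mul_assoc])

end IsZeroTwoRegular

theorem not_isZeroTwoRegular {G : Type*} [Group G] [Finite G] {t a b : G} (ht : t * t = 1)
    (hta : t * a * t = a⁻¹) (htb : t * b * t = b⁻¹) (hab : Commute a b) (V : Set G) :
    ¬ IsZeroTwoRegular t (t * a) (t * b) V := by
  intro h
  have hcover := h.mem_or_mul_mem ht hta htb hab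
  have hmul (c : G) (hc : ∀ x ∈ V, t * c * x ∉ V) (x : G) (hx : x ∈ V) : c * x ∈ V :=
    (hcover (c * x)).resolve_right (by rw [← mul_assoc]; exact hc x hx)
  have ha := hmul a fun x hx => (h.notMem_of_mem x hx).2.1
  have hb := hmul b fun x hx => (h.notMem_of_mem x hx).2.2
  obtain ⟨x, hx⟩ : V.Nonempty := (hcover 1).elim (⟨1, ·⟩) (⟨_, ·⟩)
  exact h.not_all_inv_mul ht hta htb x
    ⟨hx, V.inv_mul_mem_of_forall_mul_mem ha hx, V.inv_mul_mem_of_forall_mul_mem hb hx⟩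

theorem stmt_13_general {G : Type*} [Group G] [Fintype G]
    (A : Subgroup G) (hA : ∀ a ∈ A, ∀ b ∈ A, a * b = b * a)
    (t : G) (ht : t * t = 1) (htA : t ∉ A)
    (hconj : ∀ a ∈ A, t * a * t = a⁻¹)
    (s s₀ s₁ : G) (hs : s ∈ A) (hs₀ : s₀ ∈ A) (hs₁ : s₁ ∈ A)
    (hsinv : s * s = 1) (hsne : s ≠ 1)
    (S : Set G) (hS : S = {s, t, t * s₀, t * s₁}) (hScard : S.ncard = 4) :
    ¬ ∃ D : Set G, IsPerfectCode (cayGraph S) D := by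
  rintro ⟨D, hD⟩
  have ht_mul_ne_one (a : G) (ha : a ∈ A) : t * a ≠ 1 := fun h =>
    htA (eq_inv_of_mul_eq_one_left h ▸ A.inv_mem ha)
  have ht_mul_sq (a : G) (ha : a ∈ A) : t * a * (t * a) = 1 := by
    rw [← mul_assoc, hconj a ha, inv_mul_cancel]
  have hst : s * t = t * s := by
    simpa [mul_assoc, ht, inv_eq_of_mul_eq_one_right hsinv] using
      (congrArg (· * t) (hconj s hs)).symm
  have hinv : ∀ x ∈ S, x⁻¹ ∈ S := by
    rw [hS]
    rintro x (rfl | rfl | rfl | rfl) <;>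
      simp [inv_eq_of_mul_eq_one_right hsinv, inv_eq_of_mul_eq_one_right ht,
        inv_eq_of_mul_eq_one_right (ht_mul_sq _ hs₀), inv_eq_of_mul_eq_one_right (ht_mul_sq _ hs₁)]
  have hnodup : [1, s, t, t * s₀, t * s₁].Nodup := by
    refine List.nodup_cons.mpr ⟨?_, List.nodup_of_ncard_eq_length ?_⟩
    · simpa using ⟨hsne.symm, fun h => htA (h ▸ A.one_mem),
        (ht_mul_ne_one s₀ hs₀).symm, (ht_mul_ne_one s₁ hs₁).symm⟩
    · rw [show {a | a ∈ [s, t, t * s₀, t * s₁]} = S by rw [hS]; ext; simp, hScard]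
      rfl
  have hsτ : ∀ τ ∈ ({t, t * s₀, t * s₁} : Set G), Commute s τ := by
    rintro τ (rfl | rfl | rfl)
    exacts [hst, Commute.mul_right hst (hA s hs s₀ hs₀), Commute.mul_right hst (hA s hs s₁ hs₁)]
  rw [isPerfectCode_cayGraph_iff hinv, hS] at hD
  exact not_isZeroTwoRegular ht (hconj s₀ hs₀) (hconj s₁ hs₁) (hA s₀ hs₀ s₁ hs₁) _
    (isZeroTwoRegular_cosetHull hD hsinv hsτ hnodup)

theorem stmt_13 {G : Type*} [Group G] [Fintype G]
    (A : Subgroup G) (hA : ∀ a ∈ A, ∀ b ∈ A, a * b = b * a)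
    (t : G) (ht : t * t = 1) (htA : t ∉ A) (hidx : A.index = 2)
    (hconj : ∀ a ∈ A, t * a * t = a⁻¹)
    (s s₀ s₁ : G) (hs : s ∈ A) (hs₀ : s₀ ∈ A) (hs₁ : s₁ ∈ A)
    (hsinv : s * s = 1) (hsne : s ≠ 1)
    (S : Set G) (hS : S = {s, t, t * s₀, t * s₁}) (hScard : S.ncard = 4)
    (hSgen : Subgroup.closure S = ⊤) :
    ¬ ∃ D : Set G, IsPerfectCode (cayGraph S) D :=
  stmt_13_general A hA t ht htA hconj s s₀ s₁ hs hs₀ hs₁ hsinv hsne S hS hScard
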